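/- arXiv:1803.02834 — 2 statements merged into one kernel-verified Lean document; each statement's English description precedes it below -/
import Mathlib

section
/- Let d ≥ 1, ξ ≥ 0, and set A := ξ•(Φ_d − (1/d²)•I), a Hermitian matrix indexed by (Fin d × Fin d), where I is the identity. Then the partial trace over the second tensor factor of the absolute value of A is a scalar matrix: the d×d matrix with entries (a,b) ↦ ∑_{k} (√(AᴴA))((a,k),(b,k)) equals (2(d²−1)ξ/d³)•I_d, where I_d is the d×d identity matrix. -/
open Matrix
open scoped ComplexOrder

open Classical in
/-- Positive semidefinite square root of a matrix (zero if not PSD). -/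
noncomputable def msqrt {n : Type*} [Fintype n] [DecidableEq n] (A : Matrix n n ℂ) :
    Matrix n n ℂ :=
  if h : A.PosSemidef then
    h.1.eigenvectorUnitary.1 * diagonal ((↑) ∘ (√·) ∘ h.1.eigenvalues) *
      (star h.1.eigenvectorUnitary : Matrix n n ℂ)
  else 0

/-- The maximally entangled projector `Φ_d`. -/
noncomputable def maxEnt (d : ℕ) : Matrix (Fin d × Fin d) (Fin d × Fin d) ℂ :=
  Matrix.of fun p q => if p.1 = p.2 ∧ q.1 = q.2 then 1 / (d : ℂ) else 0

/-!
`Φ_d` is an orthogonal projection, so `A = ξ (1 - 1/d²) Φ_d - (ξ/d²) (1 - Φ_d)` is diagonal with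
respect to `Φ_d` and `1 - Φ_d`, and `√(AᴴA) = ξ (1 - 1/d²) Φ_d + (ξ/d²) (1 - Φ_d)`. Tracing out the
second factor sends `Φ_d` to `I/d` and `1` to `d I`, so the result is
`(ξ (d² - 1)/d³ + ξ (d² - 1)/d³) I`.
-/

theorem IsIdempotentElem.smul_add_smul_one_sub_mul {K R : Type*} [CommSemiring K] [Ring R]
    [Algebra K R] {p : R} (hp : IsIdempotentElem p) (a b c e : K) :
    (a • p + b • (1 - p)) * (c • p + e • (1 - p)) = (a * c) • p + (b * e) • (1 - p) := by
  simp only [add_mul, mul_add, smul_mul_assoc, mul_smul_comm, hp.eq, hp.mul_one_sub_self,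
    hp.one_sub_mul_self, hp.one_sub.eq, smul_zero, add_zero, zero_add, smul_smul, mul_comm c a,
    mul_comm e b]

namespace Matrix

variable {m n : Type*} [Fintype n]

theorem _root_.IsStarProjection.posSemidef {R : Type*} [CommRing R] [PartialOrder R] [StarRing R]
    [StarOrderedRing R] {p : Matrix n n R} (hp : IsStarProjection p) : p.PosSemidef := by
  have hherm : pᴴ = p := hp.isSelfAdjoint
  simpa [hherm, hp.isIdempotentElem.eq] using posSemidef_conjTranspose_mul_self p

variable [DecidableEq n]

open scoped MatrixOrder in
theorem msqrt_eq_cfc_sqrt {M : Matrix n n ℂ} (hM : M.PosSemidef) : msqrt M = CFC.sqrt M := by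
  rw [CFC.sqrt_eq_real_sqrt M hM.nonneg, cfcₙ_eq_cfc, hM.1.cfc_eq, msqrt, dif_pos hM]
  rfl

open scoped MatrixOrder in
theorem msqrt_eq_of_mul_self {M B : Matrix n n ℂ} (hB : B.PosSemidef) (h : B * B = M) :
    msqrt M = B := by
  have hM : M.PosSemidef := by
    simpa [hB.1.eq, h] using posSemidef_conjTranspose_mul_self B
  rw [msqrt_eq_cfc_sqrt hM]
  exact CFC.sqrt_unique h hB.nonneg

theorem msqrt_conjTranspose_mul_self_smul_add_smul_one_sub {p : Matrix n n ℂ}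
    (hp : IsStarProjection p) (a b : ℝ) :
    msqrt (((a : ℂ) • p + (b : ℂ) • (1 - p))ᴴ * ((a : ℂ) • p + (b : ℂ) • (1 - p))) =
      ((|a| : ℝ) : ℂ) • p + ((|b| : ℝ) : ℂ) • (1 - p) := by
  have hherm : pᴴ = p := hp.isSelfAdjoint
  have hpsd : (((|a| : ℝ) : ℂ) • p + ((|b| : ℝ) : ℂ) • (1 - p)).PosSemidef :=
    (hp.posSemidef.smul (by exact_mod_cast abs_nonneg a)).add
      (hp.one_sub.posSemidef.smul (by exact_mod_cast abs_nonneg b))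
  refine msqrt_eq_of_mul_self hpsd ?_
  simp only [conjTranspose_add, conjTranspose_smul, conjTranspose_sub, conjTranspose_one, hherm,
    Complex.star_def, Complex.conj_ofReal, hp.isIdempotentElem.smul_add_smul_one_sub_mul]
  congr 2 <;> norm_cast <;> simp

variable (R : Type*) [CommSemiring R]

def partialTraceRight : Matrix (m × n) (m × n) R →ₗ[R] Matrix m m R where
  toFun M := of fun a b => ∑ k, M (a, k) (b, k)
  map_add' M N := by ext; simp [Finset.sum_add_distrib]
  map_smul' c M := by ext; simp [Finset.mul_sum]

theorem partialTraceRight_one [DecidableEq m] :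
    partialTraceRight R (1 : Matrix (m × n) (m × n) R) = (Fintype.card n : R) • 1 := by
  ext a b
  by_cases hab : a = b <;> simp [partialTraceRight, one_apply, hab]

end Matrix

theorem isStarProjection_maxEnt {d : ℕ} (hd : d ≠ 0) : IsStarProjection (maxEnt d) where
  isIdempotentElem := by
    have hd0 : (d : ℂ) ≠ 0 := Nat.cast_ne_zero.mpr hd
    change maxEnt d * maxEnt d = maxEnt d
    ext p q
    rw [mul_apply, Fintype.sum_prod_type]
    simp only [maxEnt, of_apply]
    by_cases h1 : p.1 = p.2 <;> by_cases h2 : q.1 = q.2 <;> simp [h1, h2, mul_inv_cancel_left₀ hd0]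
  isSelfAdjoint := by
    ext p q
    simp only [star_apply, maxEnt, of_apply]
    by_cases h1 : q.1 = q.2 <;> by_cases h2 : p.1 = p.2 <;> simp [h1, h2]

theorem partialTraceRight_maxEnt (d : ℕ) :
    partialTraceRight ℂ (maxEnt d) = (1 / (d : ℂ)) • 1 := by
  ext a b
  by_cases hab : a = b
  · subst hab
    simp [partialTraceRight, maxEnt]
  · have hne : ∀ k, ¬(a = k ∧ b = k) := fun k h => hab (h.1.trans h.2.symm)
    simp [partialTraceRight, maxEnt, hab, hne]

theorem partial_trace_abs_isotropic_difference_scalar (d : ℕ) (hd : 1 ≤ d) (ξ : ℝ) (hξ : 0 ≤ ξ)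
    (A : Matrix (Fin d × Fin d) (Fin d × Fin d) ℂ)
    (hA : A = ξ • (maxEnt d - ((1 : ℝ) / (d : ℝ) ^ 2) •
        (1 : Matrix (Fin d × Fin d) (Fin d × Fin d) ℂ))) :
    (Matrix.of fun a b : Fin d => ∑ k : Fin d, msqrt (Aᴴ * A) (a, k) (b, k)) =
      ((2 * ((d : ℝ) ^ 2 - 1) * ξ / (d : ℝ) ^ 3 : ℝ) : ℂ) • (1 : Matrix (Fin d) (Fin d) ℂ) := by
  have hdR : (1 : ℝ) ≤ d := by exact_mod_cast hd
  have hA_eq : A = ((ξ * (1 - 1 / (d : ℝ) ^ 2) : ℝ) : ℂ) • maxEnt d +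
      ((-(ξ / (d : ℝ) ^ 2) : ℝ) : ℂ) • (1 - maxEnt d) := by
    rw [hA]
    match_scalars <;> push_cast [Complex.coe_algebraMap] <;> ring
  have habs₁ : |ξ * (1 - 1 / (d : ℝ) ^ 2)| = ξ * (1 - 1 / (d : ℝ) ^ 2) :=
    abs_of_nonneg <| mul_nonneg hξ <| sub_nonneg.mpr <|
      div_le_one_of_le₀ (by nlinarith) (by positivity)
  have habs₂ : |-(ξ / (d : ℝ) ^ 2)| = ξ / (d : ℝ) ^ 2 := by
    rw [abs_neg, abs_of_nonneg (by positivity)]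
  change partialTraceRight ℂ (msqrt (Aᴴ * A)) = _
  rw [hA_eq,
    msqrt_conjTranspose_mul_self_smul_add_smul_one_sub (isStarProjection_maxEnt (by omega)),
    habs₁, habs₂, map_add, map_smul, map_smul, map_sub, partialTraceRight_one,
    partialTraceRight_maxEnt, Fintype.card_fin, smul_smul, ← sub_smul, smul_smul,
    ← add_smul]
  congr 1
  push_cast
  field_simp
  ring
end

section
/- Let p₀, p₁ be real numbers with 0 ≤ p₀ ≤ 1 and 0 ≤ p₁ ≤ 1, and let ρ_{p₀} and ρ_{p₁} be the Choi matrices of the corresponding amplitude damping channels. Then both matrices are positive semidefinite, and their fidelity equals F(ρ_{p₀}, ρ_{p₁}) = (1 + √((1−p₀)(1−p₁)) + √(p₀·p₁)) / 2. -/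
open Matrix
open scoped ComplexOrder

/-- Fidelity `F(ρ,σ) = Tr √(√ρ σ √ρ)` of two (positive semidefinite) matrices. -/
noncomputable def mFidelity {n : Type*} [Fintype n] [DecidableEq n]
    (ρ σ : Matrix n n ℂ) : ℝ :=
  ((msqrt (msqrt ρ * σ * msqrt ρ)).trace).re

/-- Choi matrix of the amplitude damping channel with damping probability `p`
(rows/columns ordered 00,01,10,11). -/
noncomputable def rhoAD (p : ℝ) : Matrix (Fin 4) (Fin 4) ℂ :=
  !![1 / 2, 0, 0, (Real.sqrt (1 - p) : ℂ) / 2;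
     0, 0, 0, 0;
     0, 0, (p : ℂ) / 2, 0;
     (Real.sqrt (1 - p) : ℂ) / 2, 0, 0, ((1 - p : ℝ) : ℂ) / 2]

/-!
Both Choi matrices lie in the family `l |v_s⟩⟨v_s| + m |e₂⟩⟨e₂|`, where `v_s = (1,0,0,s)`,
`s = √(1-p)` and `e₂ ⊥ v_s`. For fixed `s` this family is closed under multiplication, so by
uniqueness of positive square roots `√` acts on it by taking square roots of the weights
(after normalising `v_s`). The product `√ρ σ √ρ` stays in the family of `ρ`, its `v`-weight
picking up `⟨v_s, v_{s'}⟩² = (1 + s s')²`, which gives `F = (1 + s s') √(l l') + √(m m')`.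
-/

noncomputable def adForm (s l m : ℝ) : Matrix (Fin 4) (Fin 4) ℂ :=
  (l : ℂ) • vecMulVec ![1, 0, 0, (s : ℂ)] (star ![1, 0, 0, (s : ℂ)]) +
    (m : ℂ) • vecMulVec ![0, 0, 1, 0] (star ![0, 0, 1, 0])

open scoped MatrixOrder in
lemma msqrt_eq_of_mul_self {n : Type*} [Fintype n] [DecidableEq n] {A S : Matrix n n ℂ}
    (hA : A.PosSemidef) (hS : S.PosSemidef) (h : S * S = A) : msqrt A = S := by
  rw [msqrt, dif_pos hA, ← CFC.sqrt_unique h hS.nonneg, CFC.sqrt_eq_cfc,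
    cfc_nnreal_eq_real _ A, hA.1.cfc_eq]
  simp only [IsHermitian.cfc, Unitary.conjStarAlgAut_apply]
  congr 3
  funext i
  simp [Real.coe_sqrt, Real.coe_toNNReal', max_eq_left (hA.eigenvalues_nonneg i)]

lemma adForm_posSemidef {s l m : ℝ} (hl : 0 ≤ l) (hm : 0 ≤ m) : (adForm s l m).PosSemidef :=
  ((posSemidef_vecMulVec_self_star _).smul (by exact_mod_cast hl)).add
    ((posSemidef_vecMulVec_self_star _).smul (by exact_mod_cast hm))

lemma adForm_mul_adForm (s l m l' m' : ℝ) :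
    adForm s l m * adForm s l' m' = adForm s (l * l' * (1 + s ^ 2)) (m * m') := by
  ext i j
  fin_cases i <;> fin_cases j <;>
    simp [adForm, vecMulVec, mul_apply, Fin.sum_univ_four] <;> ring

lemma adForm_mul_adForm_mul_adForm (s s' l m l' m' : ℝ) :
    adForm s l m * adForm s' l' m' * adForm s l m
      = adForm s (l ^ 2 * l' * (1 + s * s') ^ 2) (m ^ 2 * m') := by
  ext i j
  fin_cases i <;> fin_cases j <;>
    simp [adForm, vecMulVec, mul_apply, Fin.sum_univ_four] <;> ring

lemma re_trace_adForm (s l m : ℝ) : (adForm s l m).trace.re = l * (1 + s ^ 2) + m := by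
  simp [adForm, vecMulVec, trace, Fin.sum_univ_four, ← Complex.ofReal_mul]
  ring

lemma rhoAD_eq_adForm {p : ℝ} (hp : p ≤ 1) :
    rhoAD p = adForm (Real.sqrt (1 - p)) (1 / 2) (p / 2) := by
  have hs : (Real.sqrt (1 - p) : ℂ) * Real.sqrt (1 - p) = ((1 - p : ℝ) : ℂ) := by
    rw [← Complex.ofReal_mul, Real.mul_self_sqrt (by linarith)]
  ext i j
  fin_cases i <;> fin_cases j <;> simp [rhoAD, adForm, vecMulVec, hs] <;> ring

lemma msqrt_adForm {s l m : ℝ} (hl : 0 ≤ l) (hm : 0 ≤ m) :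
    msqrt (adForm s l m) = adForm s (Real.sqrt (l / (1 + s ^ 2))) (Real.sqrt m) := by
  refine msqrt_eq_of_mul_self (adForm_posSemidef hl hm)
    (adForm_posSemidef (Real.sqrt_nonneg _) (Real.sqrt_nonneg _)) ?_
  have hs : 0 < 1 + s ^ 2 := by positivity
  rw [adForm_mul_adForm, Real.mul_self_sqrt (by positivity), Real.mul_self_sqrt hm,
    div_mul_cancel₀ _ hs.ne']

lemma mFidelity_adForm {s s' l m l' m' : ℝ} (hl : 0 ≤ l) (hm : 0 ≤ m) (hl' : 0 ≤ l')
    (hm' : 0 ≤ m') (hss' : 0 ≤ 1 + s * s') :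
    mFidelity (adForm s l m) (adForm s' l' m') = (1 + s * s') * Real.sqrt (l * l') +
      Real.sqrt (m * m') := by
  have hs : 0 < 1 + s ^ 2 := by positivity
  rw [mFidelity, msqrt_adForm hl hm, adForm_mul_adForm_mul_adForm, msqrt_adForm (by positivity)
    (by positivity), re_trace_adForm, Real.sq_sqrt (by positivity), Real.sq_sqrt hm]
  have hweight : l / (1 + s ^ 2) * l' * (1 + s * s') ^ 2 / (1 + s ^ 2)
      = ((1 + s * s') / (1 + s ^ 2)) ^ 2 * (l * l') := by
    field_simp
  rw [hweight, Real.sqrt_mul (sq_nonneg _), Real.sqrt_sq (by positivity)]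
  field_simp

theorem fidelity_amplitude_damping_choi (p₀ p₁ : ℝ)
    (h₀0 : 0 ≤ p₀) (h₀1 : p₀ ≤ 1) (h₁0 : 0 ≤ p₁) (h₁1 : p₁ ≤ 1) :
    (rhoAD p₀).PosSemidef ∧ (rhoAD p₁).PosSemidef ∧
      mFidelity (rhoAD p₀) (rhoAD p₁) =
        (1 + Real.sqrt ((1 - p₀) * (1 - p₁)) + Real.sqrt (p₀ * p₁)) / 2 := by
  rw [rhoAD_eq_adForm h₀1, rhoAD_eq_adForm h₁1]
  refine ⟨adForm_posSemidef (by norm_num) (by linarith),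
    adForm_posSemidef (by norm_num) (by linarith), ?_⟩
  have hs : Real.sqrt (1 - p₀) * Real.sqrt (1 - p₁) = Real.sqrt ((1 - p₀) * (1 - p₁)) :=
    (Real.sqrt_mul (by linarith) _).symm
  have hhalf : Real.sqrt (1 / 2 * (1 / 2)) = 1 / 2 := Real.sqrt_mul_self (by norm_num)
  have hp : Real.sqrt (p₀ / 2 * (p₁ / 2)) = Real.sqrt (p₀ * p₁) / 2 := by
    rw [div_mul_div_comm, Real.sqrt_div' _ (by norm_num), show (2 * 2 : ℝ) = 2 ^ 2 by norm_num,
      Real.sqrt_sq zero_le_two]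
  rw [mFidelity_adForm (by norm_num) (by linarith) (by norm_num) (by linarith) (by positivity),
    hs, hhalf, hp]
  ring
end
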